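/- arXiv:1802.06621 — 7 statements merged into one kernel-verified Lean document; each statement's English description precedes it below -/
import Mathlib

section
/- If S and S' are two vertex subsets defining maximum weight ideal cuts in an edge-weighted DAG G (with source s and sink t, where every vertex lies on some s-t path), then S ∪ S' and S ∩ S' also define maximum weight ideal cuts, and all four cuts have equal weight. -/
/-- An ideal cut: `s ∈ S`, `t ∉ S`, and no edge of `E` enters `S` from its complement. -/
def IdealCut {V : Type*} (E : V → V → Prop) (s t : V) (S : Finset V) : Prop :=
  s ∈ S ∧ t ∉ S ∧ ∀ u v : V, E u v → v ∈ S → u ∈ S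

/-- The weight of the cut: total weight of edges from `S` to its complement. -/
def cutWeight {V : Type*} [Fintype V] [DecidableEq V] (E : V → V → Prop) [DecidableRel E]
    (w : V → V → ℚ) (S : Finset V) : ℚ :=
  ∑ q ∈ Finset.univ.filter (fun q : V × V => E q.1 q.2 ∧ q.1 ∈ S ∧ q.2 ∉ S), w q.1 q.2

/-- A maximum weight ideal cut. -/
def MaxIdealCut {V : Type*} [Fintype V] [DecidableEq V] (E : V → V → Prop) [DecidableRel E]
    (s t : V) (w : V → V → ℚ) (S : Finset V) : Prop :=
  IdealCut E s t S ∧ ∀ S' : Finset V, IdealCut E s t S' → cutWeight E w S' ≤ cutWeight E w S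

/-- The directed graph is acyclic. -/
def Acyclic {V : Type*} (E : V → V → Prop) : Prop := ∀ v : V, ¬ Relation.TransGen E v v

/-- Every vertex is reachable from `s` and reaches `t`. -/
def EveryVertexOnPath {V : Type*} (E : V → V → Prop) (s t : V) : Prop :=
  ∀ v : V, Relation.ReflTransGen E s v ∧ Relation.ReflTransGen E v t


theorem cutWeight_modular {V : Type*} [Fintype V] [DecidableEq V]
    (E : V → V → Prop) [DecidableRel E] (w : V → V → ℚ) (S S' : Finset V)
    (hS : ∀ u v : V, E u v → v ∈ S → u ∈ S)
    (hS' : ∀ u v : V, E u v → v ∈ S' → u ∈ S') :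
    cutWeight E w (S ∪ S') + cutWeight E w (S ∩ S')
      = cutWeight E w S + cutWeight E w S' := by
  unfold cutWeight
  rw [Finset.sum_filter, Finset.sum_filter, Finset.sum_filter, Finset.sum_filter,
    ← Finset.sum_add_distrib, ← Finset.sum_add_distrib]
  apply Finset.sum_congr rfl
  intro q _
  by_cases hE : E q.1 q.2
  · have h1 := hS q.1 q.2 hE
    have h2 := hS' q.1 q.2 hE
    simp only [hE, true_and, Finset.mem_union, Finset.mem_inter]
    by_cases ha : q.1 ∈ S <;> by_cases hb : q.1 ∈ S' <;>
      by_cases hc : q.2 ∈ S <;> by_cases hd : q.2 ∈ S' <;>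
      simp_all <;> ring
  · simp [hE]

theorem idealCut_union {V : Type*} (E : V → V → Prop) (s t : V) [DecidableEq V]
    {S S' : Finset V} (h : IdealCut E s t S) (h' : IdealCut E s t S') :
    IdealCut E s t (S ∪ S') := by
  refine ⟨Finset.mem_union_left _ h.1, ?_, ?_⟩
  · simp [h.2.1, h'.2.1]
  · intro u v hE hv
    rcases Finset.mem_union.mp hv with hv | hv
    · exact Finset.mem_union_left _ (h.2.2 u v hE hv)
    · exact Finset.mem_union_right _ (h'.2.2 u v hE hv)

theorem idealCut_inter {V : Type*} (E : V → V → Prop) (s t : V) [DecidableEq V]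
    {S S' : Finset V} (h : IdealCut E s t S) (h' : IdealCut E s t S') :
    IdealCut E s t (S ∩ S') := by
  refine ⟨Finset.mem_inter.mpr ⟨h.1, h'.1⟩, fun ht => h.2.1 (Finset.mem_inter.mp ht).1, ?_⟩
  intro u v hE hv
  rcases Finset.mem_inter.mp hv with ⟨hv1, hv2⟩
  exact Finset.mem_inter.mpr ⟨h.2.2 u v hE hv1, h'.2.2 u v hE hv2⟩

/-- If `S` and `S'` define maximum weight ideal cuts in a DAG (source `s`, sink `t`,
every vertex on some `s`-`t` path), then so do `S ∪ S'` and `S ∩ S'`,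
and all four cuts have equal weight. -/
theorem maxIdealCut_union_inter {V : Type*} [Fintype V] [DecidableEq V]
    (E : V → V → Prop) [DecidableRel E] (s t : V) (w : V → V → ℚ)
    (hacyc : Acyclic E) (hpath : EveryVertexOnPath E s t)
    (S S' : Finset V)
    (hS : MaxIdealCut E s t w S) (hS' : MaxIdealCut E s t w S') :
    MaxIdealCut E s t w (S ∪ S') ∧ MaxIdealCut E s t w (S ∩ S') ∧
      cutWeight E w (S ∪ S') = cutWeight E w S ∧
      cutWeight E w (S ∩ S') = cutWeight E w S ∧
      cutWeight E w S' = cutWeight E w S := by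
  obtain ⟨hSi, hSm⟩ := hS
  obtain ⟨hS'i, hS'm⟩ := hS'
  have hu : IdealCut E s t (S ∪ S') := idealCut_union E s t hSi hS'i
  have hi : IdealCut E s t (S ∩ S') := idealCut_inter E s t hSi hS'i
  have hmod := cutWeight_modular E w S S' hSi.2.2 hS'i.2.2
  have h1 : cutWeight E w (S ∪ S') ≤ cutWeight E w S := hSm _ hu
  have h2 : cutWeight E w (S ∩ S') ≤ cutWeight E w S := hSm _ hi
  have h3 : cutWeight E w S' = cutWeight E w S :=
    le_antisymm (hSm _ hS'i) (hS'm _ hSi)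
  have h4 : cutWeight E w (S ∪ S') = cutWeight E w S := by linarith
  have h5 : cutWeight E w (S ∩ S') = cutWeight E w S := by linarith
  exact ⟨⟨hu, fun T hT => (hSm T hT).trans h4.ge⟩,
    ⟨hi, fun T hT => (hSm T hT).trans h5.ge⟩, h4, h5, h3⟩
end

section
/- For any feasible solution y of the LP relaxation of the maximum weight ideal cut problem, the integral vector y* defined by y*_v = 1 if y_v > 0 and y*_v = 0 otherwise is feasible; moreover, if y is optimal then y* achieves the same objective value as y. -/
/-- Feasibility for the LP relaxation of the maximum weight ideal cut problem. -/
def LPFeasible {V : Type*} (E : V → V → Prop) (s t : V) (y : V → ℚ) : Prop :=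
  (∀ u v : V, E u v → y u ≤ y v) ∧ y s = 0 ∧ y t = 1

/-- The LP objective value `∑_{uv ∈ E} w_{uv} (y_v - y_u)`. -/
def LPValue {V : Type*} [Fintype V] (E : V → V → Prop) [DecidableRel E]
    (w : V → V → ℚ) (y : V → ℚ) : ℚ :=
  ∑ q ∈ Finset.univ.filter (fun q : V × V => E q.1 q.2), w q.1 q.2 * (y q.2 - y q.1)

/-- Optimality for the LP relaxation. -/
def LPOptimal {V : Type*} [Fintype V] (E : V → V → Prop) [DecidableRel E]
    (s t : V) (w : V → V → ℚ) (y : V → ℚ) : Prop :=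
  LPFeasible E s t y ∧ ∀ y' : V → ℚ, LPFeasible E s t y' → LPValue E w y' ≤ LPValue E w y

theorem exists_pos_forall_le_of_pos {ι K : Type*} [Finite ι] [LinearOrder K] [Zero K]
    [NoMaxOrder K] (f : ι → K) : ∃ ε > 0, ∀ i, 0 < f i → ε ≤ f i := by
  by_cases hpos : ∃ i, 0 < f i
  · obtain ⟨i, hi, hmin⟩ := Set.exists_min_image {i | 0 < f i} f (Set.toFinite _) hpos
    exact ⟨f i, hi, hmin⟩
  · obtain ⟨ε, hε⟩ := exists_gt (0 : K)
    exact ⟨ε, hε, fun i hi => absurd ⟨i, hi⟩ hpos⟩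

def lpRound {V : Type*} (y : V → ℚ) : V → ℚ := fun v => if 0 < y v then 1 else 0

section

variable {V : Type*} {E : V → V → Prop} {s t : V} {y : V → ℚ}

theorem LPValue_smul_add_smul [Fintype V] [DecidableRel E] (w : V → V → ℚ) (a b : ℚ)
    (f g : V → ℚ) :
    LPValue E w (a • f + b • g) = a * LPValue E w f + b * LPValue E w g := by
  simp only [LPValue, Finset.mul_sum, ← Finset.sum_add_distrib]
  refine Finset.sum_congr rfl fun q _ => ?_
  simp only [Pi.add_apply, Pi.smul_apply, smul_eq_mul]
  ring

theorem LPOptimal.LPValue_eq_of_feasible_extension [Fintype V] [DecidableRel E]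
    {w : V → V → ℚ} {x : V → ℚ} {ε : ℚ} (hy : LPOptimal E s t w y) (hx : LPFeasible E s t x)
    (hε : 0 < ε) (hz : LPFeasible E s t ((1 + ε) • y + (-ε) • x)) :
    LPValue E w x = LPValue E w y := by
  have hxy := hy.2 x hx
  have hzy := hy.2 _ hz
  rw [LPValue_smul_add_smul] at hzy
  exact le_antisymm hxy (le_of_mul_le_mul_left (by linarith) hε)

theorem lpFeasible_lpRound (hy : LPFeasible E s t y) : LPFeasible E s t (lpRound y) := by
  obtain ⟨hmono, hs, ht⟩ := hy
  refine ⟨fun u v huv => ?_, by simp [lpRound, hs], by simp [lpRound, ht]⟩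
  by_cases hu : 0 < y u
  · simp [lpRound, hu, hu.trans_le (hmono u v huv)]
  · simp only [lpRound, hu, if_false]
    split_ifs <;> norm_num

theorem lpFeasible_smul_add_neg_smul_lpRound (hy : LPFeasible E s t y) {ε : ℚ} (hε : 0 < ε)
    (hεy : ∀ v, 0 < y v → ε ≤ y v) :
    LPFeasible E s t ((1 + ε) • y + (-ε) • lpRound y) := by
  obtain ⟨hmono, hs, ht⟩ := hy
  refine ⟨fun u v huv => ?_, by simp [lpRound, hs], by simp [lpRound, ht]⟩
  have hle := hmono u v huv
  simp only [Pi.add_apply, Pi.smul_apply, smul_eq_mul, lpRound]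
  by_cases hu : 0 < y u
  · simp only [hu, hu.trans_le hle, if_true]
    nlinarith
  · by_cases hv : 0 < y v
    · have := hεy v hv
      simp only [hu, hv, if_true, if_false]
      nlinarith
    · simp only [hu, hv, if_false]
      nlinarith

end

theorem lp_rounding_general {V : Type*} [Fintype V]
    (E : V → V → Prop) [DecidableRel E] (s t : V) (w : V → V → ℚ)
    (y : V → ℚ) (hy : LPFeasible E s t y) :
    LPFeasible E s t (fun v => if 0 < y v then 1 else 0) ∧
      (LPOptimal E s t w y →
        LPValue E w (fun v => if 0 < y v then 1 else 0) = LPValue E w y) := by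
  obtain ⟨ε, hε, hεy⟩ := exists_pos_forall_le_of_pos y
  have hround := lpFeasible_lpRound hy
  exact ⟨hround, fun hopt => hopt.LPValue_eq_of_feasible_extension hround hε
    (lpFeasible_smul_add_neg_smul_lpRound hy hε hεy)⟩

/-- Rounding: for a feasible LP solution `y`, the 0/1 vector `y*` with `y*_v = 1` iff
`y_v > 0` is feasible; and if `y` is optimal, `y*` has the same objective value. -/
theorem lp_rounding {V : Type*} [Fintype V] [DecidableEq V]
    (E : V → V → Prop) [DecidableRel E] (s t : V) (w : V → V → ℚ)
    (hacyc : Acyclic E) (hpath : EveryVertexOnPath E s t)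
    (y : V → ℚ) (hy : LPFeasible E s t y) :
    LPFeasible E s t (fun v => if 0 < y v then 1 else 0) ∧
      (LPOptimal E s t w y →
        LPValue E w (fun v => if 0 < y v then 1 else 0) = LPValue E w y) :=
  lp_rounding_general E s t w y hy
end

section
/- If y is an optimal solution of the ideal cut LP and a ∈ (0,1) is a value attained by some coordinate of y, then letting S_a = {v : y_v = a}, the total weight of edges entering S_a equals the total weight of edges leaving S_a. -/
/-- If `y` is an optimal LP solution and `a ∈ (0,1)` is attained by some coordinate of
`y`, then for `S_a = {v : y_v = a}`, the total weight of edges entering `S_a` equals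
the total weight of edges leaving `S_a`. -/
theorem lp_level_set_balance {V : Type*} [Fintype V] [DecidableEq V]
    (E : V → V → Prop) [DecidableRel E] (s t : V) (w : V → V → ℚ)
    (hacyc : Acyclic E) (hpath : EveryVertexOnPath E s t)
    (y : V → ℚ) (hy : LPOptimal E s t w y)
    (a : ℚ) (ha0 : 0 < a) (ha1 : a < 1) (hatt : ∃ v : V, y v = a) :
    ∑ q ∈ Finset.univ.filter
        (fun q : V × V => E q.1 q.2 ∧ y q.1 ≠ a ∧ y q.2 = a), w q.1 q.2 =
      ∑ q ∈ Finset.univ.filter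
        (fun q : V × V => E q.1 q.2 ∧ y q.1 = a ∧ y q.2 ≠ a), w q.1 q.2 := by
  classical
  obtain ⟨⟨hmono, hs, ht⟩, hopt⟩ := hy
  set C : Finset (V × V) := Finset.univ.filter
    (fun q : V × V => E q.1 q.2 ∧ ¬ (y q.1 = a ↔ y q.2 = a)) with hC
  have hslack : ∀ q ∈ C, 0 < y q.2 - y q.1 := by
    intro q hq
    simp only [hC, Finset.mem_filter, Finset.mem_univ, true_and] at hq
    obtain ⟨hE, hne⟩ := hq
    have hle := hmono q.1 q.2 hE
    have hne' : y q.1 ≠ y q.2 := by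
      intro h; apply hne; rw [h]
    have := lt_of_le_of_ne hle hne'
    linarith
  obtain ⟨ε, hε0, hεle⟩ : ∃ ε : ℚ, 0 < ε ∧ ∀ q ∈ C, ε ≤ y q.2 - y q.1 := by
    by_cases h : C.Nonempty
    · refine ⟨C.inf' h (fun q => y q.2 - y q.1), ?_, ?_⟩
      · obtain ⟨q, hq, hval⟩ := Finset.exists_mem_eq_inf' h (fun q => y q.2 - y q.1)
        rw [hval]; exact hslack q hq
      · intro q hq; exact Finset.inf'_le _ hq
    · exact ⟨1, one_pos, fun q hq => absurd ⟨q, hq⟩ h⟩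
  have hsa : y s ≠ a := by rw [hs]; exact fun h => absurd h.symm (ne_of_gt ha0)
  have hta : y t ≠ a := by rw [ht]; exact fun h => absurd h (ne_of_gt ha1)
  -- feasibility of perturbed solutions
  have feas : ∀ δ : ℚ, -ε ≤ δ → δ ≤ ε →
      LPFeasible E s t (fun v => y v + if y v = a then δ else 0) := by
    intro δ hδ1 hδ2
    refine ⟨?_, ?_, ?_⟩
    · intro u v hE
      by_cases hu : y u = a <;> by_cases hv : y v = a <;>
        simp only [hu, hv, if_pos, if_neg, if_true, if_false]
      · have := hmono u v hE; simpa using this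
      · have hmem : (u, v) ∈ C := by
          simp only [hC, Finset.mem_filter, Finset.mem_univ, true_and]
          exact ⟨hE, by simp [hu, hv]⟩
        have := hεle _ hmem
        simp only at this
        linarith
      · have hmem : (u, v) ∈ C := by
          simp only [hC, Finset.mem_filter, Finset.mem_univ, true_and]
          exact ⟨hE, by simp [hu, hv]⟩
        have := hεle _ hmem
        simp only at this
        linarith
      · have := hmono u v hE; simpa using this
    · show y s + (if y s = a then δ else 0) = 0
      rw [if_neg hsa, add_zero, hs]
    · show y t + (if y t = a then δ else 0) = 1
      rw [if_neg hta, add_zero, ht]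
  -- key sums
  set SA : ℚ := ∑ q ∈ Finset.univ.filter
      (fun q : V × V => E q.1 q.2 ∧ y q.2 = a), w q.1 q.2 with hSA
  set SB : ℚ := ∑ q ∈ Finset.univ.filter
      (fun q : V × V => E q.1 q.2 ∧ y q.1 = a), w q.1 q.2 with hSB
  have hval : ∀ δ : ℚ, LPValue E w (fun v => y v + if y v = a then δ else 0)
      = LPValue E w y + δ * (SA - SB) := by
    intro δ
    have hterm : ∀ q : V × V,
        w q.1 q.2 * ((y q.2 + if y q.2 = a then δ else 0)
          - (y q.1 + if y q.1 = a then δ else 0))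
        = w q.1 q.2 * (y q.2 - y q.1)
          + ((if y q.2 = a then δ * w q.1 q.2 else 0)
            - (if y q.1 = a then δ * w q.1 q.2 else 0)) := by
      intro q; split_ifs <;> ring
    simp only [LPValue]
    rw [show (fun q : V × V => w q.1 q.2 * ((y q.2 + if y q.2 = a then δ else 0)
          - (y q.1 + if y q.1 = a then δ else 0))) = fun q : V × V =>
        w q.1 q.2 * (y q.2 - y q.1)
          + ((if y q.2 = a then δ * w q.1 q.2 else 0)
            - (if y q.1 = a then δ * w q.1 q.2 else 0)) from funext hterm]
    rw [Finset.sum_add_distrib, Finset.sum_sub_distrib]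
    rw [← Finset.sum_filter, ← Finset.sum_filter, Finset.filter_filter,
      Finset.filter_filter]
    rw [hSA, hSB, mul_sub, Finset.mul_sum, Finset.mul_sum]
  have h1 := hopt _ (feas ε (by linarith) le_rfl)
  have h2 := hopt _ (feas (-ε) le_rfl (by linarith))
  rw [hval] at h1 h2
  have hSAB : SA = SB := by
    rcases lt_trichotomy SA SB with h | h | h
    · nlinarith
    · exact h
    · nlinarith
  -- split SA and SB
  set SAB : ℚ := ∑ q ∈ Finset.univ.filter
      (fun q : V × V => (E q.1 q.2 ∧ y q.2 = a) ∧ y q.1 = a), w q.1 q.2 with hSAB'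
  have hA : SA = (∑ q ∈ Finset.univ.filter
      (fun q : V × V => E q.1 q.2 ∧ y q.1 ≠ a ∧ y q.2 = a), w q.1 q.2) + SAB := by
    rw [hSA, hSAB', ← Finset.sum_filter_add_sum_filter_not
      (Finset.univ.filter (fun q : V × V => E q.1 q.2 ∧ y q.2 = a))
      (fun q => y q.1 = a) (fun q => w q.1 q.2)]
    rw [add_comm, Finset.filter_filter, Finset.filter_filter]
    congr 2
    · apply Finset.filter_congr; intro q _; constructor
      · rintro ⟨⟨h1, h2⟩, h3⟩; exact ⟨h1, h3, h2⟩
      · rintro ⟨h1, h2, h3⟩; exact ⟨⟨h1, h3⟩, h2⟩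
  have hB : SB = (∑ q ∈ Finset.univ.filter
      (fun q : V × V => E q.1 q.2 ∧ y q.1 = a ∧ y q.2 ≠ a), w q.1 q.2) + SAB := by
    rw [hSB, hSAB', ← Finset.sum_filter_add_sum_filter_not
      (Finset.univ.filter (fun q : V × V => E q.1 q.2 ∧ y q.1 = a))
      (fun q => y q.2 = a) (fun q => w q.1 q.2)]
    rw [add_comm, Finset.filter_filter, Finset.filter_filter]
    congr 2
    · apply Finset.filter_congr; intro q _; constructor
      · rintro ⟨⟨h1, h2⟩, h3⟩; exact ⟨h1, h2, h3⟩
      · rintro ⟨h1, h2, h3⟩; exact ⟨⟨h1, h2⟩, h3⟩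
    · apply Finset.filter_congr; intro q _; constructor
      · rintro ⟨⟨h1, h2⟩, h3⟩; exact ⟨⟨h1, h3⟩, h2⟩
      · rintro ⟨⟨h1, h2⟩, h3⟩; exact ⟨⟨h1, h3⟩, h2⟩
  linarith [hA, hB, hSAB]
end

section
/- In any basic feasible solution of the ideal cut polytope, the active graph contains no path joining s and t, and consequently consists of exactly two disjoint trees, one containing s and one containing t, which together span all of V. -/
/-- The family of constraint (normal) vectors: the two equality constraints `y_s = 0`,
`y_t = 1` together with the vectors `y ↦ y_{p.2} - y_{p.1}` of the edge constraints
indexed by a finite set `A` of edges. -/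
noncomputable def constrFamily {V : Type*} [DecidableEq V] (s t : V) (A : Finset (V × V)) :
    (Fin 2 ⊕ {p : V × V // p ∈ A}) → (V → ℚ) :=
  Sum.elim ![Pi.single s 1, Pi.single t 1]
    (fun e => Pi.single e.1.2 1 - Pi.single e.1.1 1)

/-- `A` is a defining system of active constraints witnessing that the feasible point `y`
is a vertex (basic feasible solution) of the ideal cut polytope: the constraints of `A`
are edge constraints, active at `y`, and together with `y_s = 0`, `y_t = 1` they form
`|V|` linearly independent constraints. -/
def DefiningSystem {V : Type*} [Fintype V] [DecidableEq V] (E : V → V → Prop) (s t : V)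
    (A : Finset (V × V)) (y : V → ℚ) : Prop :=
  (∀ p ∈ A, E p.1 p.2) ∧ (∀ p ∈ A, y p.1 = y p.2) ∧
    A.card + 2 = Fintype.card V ∧
    LinearIndependent ℚ (constrFamily s t A)

/-- The (undirected simple) active graph of a set `A` of active edge constraints. -/
def activeGraph {V : Type*} [DecidableEq V] (A : Finset (V × V)) : SimpleGraph V where
  Adj u v := u ≠ v ∧ ((u, v) ∈ A ∨ (v, u) ∈ A)
  symm := by
    constructor
    intro u v h
    exact ⟨h.1.symm, h.2.symm⟩
  loopless := by
    constructor
    intro v h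
    exact h.1 rfl

open SimpleGraph Submodule

theorem SimpleGraph.Reachable.single_sub_single_mem {V R : Type*} [DecidableEq V] [Ring R]
    {G : SimpleGraph V} {W : Submodule R (V → R)}
    (hW : ∀ a b, G.Adj a b → Pi.single b 1 - Pi.single a 1 ∈ W) {a b : V} (h : G.Reachable a b) :
    Pi.single b 1 - Pi.single a 1 ∈ W := by
  obtain ⟨p⟩ := h
  induction p with
  | nil => simp
  | @cons a b c hab _ ih =>
    simpa using add_mem ih (hW a b hab)

section ActiveGraph

variable {V : Type*} [DecidableEq V] {A : Finset (V × V)}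

theorem exists_mem_sym2_eq_of_activeGraph_adj {a b : V} (h : (activeGraph A).Adj a b) :
    ∃ q ∈ A, s(q.1, q.2) = s(a, b) := by
  rcases h.2 with h | h
  · exact ⟨_, h, rfl⟩
  · exact ⟨_, h, Sym2.eq_swap⟩

theorem activeGraph_reachable_of_mem {q : V × V} (hq : q ∈ A) :
    (activeGraph A).Reachable q.1 q.2 := by
  by_cases h : q.1 = q.2
  · rw [h]
  · exact Adj.reachable ⟨h, .inl hq⟩

variable {s t : V}

theorem single_sub_single_mem_span_constrFamily {S : Set (Fin 2 ⊕ {p : V × V // p ∈ A})}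
    {q : V × V} (hq : q ∈ A) (hS : .inr ⟨q, hq⟩ ∈ S) {a b : V} (h : s(q.1, q.2) = s(a, b)) :
    Pi.single b 1 - Pi.single a 1 ∈ span ℚ (constrFamily s t A '' S) := by
  have hmem : Pi.single q.2 1 - Pi.single q.1 1 ∈ span ℚ (constrFamily s t A '' S) :=
    subset_span ⟨_, hS, rfl⟩
  rcases Sym2.eq_iff.1 h with ⟨h1, h2⟩ | ⟨h1, h2⟩
  · rwa [← h1, ← h2]
  · rw [← h1, ← h2, ← neg_sub]
    exact neg_mem hmem

theorem not_reachable_activeGraph (hli : LinearIndependent ℚ (constrFamily s t A)) :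
    ¬ (activeGraph A).Reachable s t := by
  intro h
  have hst : Pi.single t 1 - Pi.single s 1 ∈ span ℚ (constrFamily s t A '' {.inl 1}ᶜ) :=
    h.single_sub_single_mem fun a b hab ↦
      have ⟨q, hq, hqe⟩ := exists_mem_sym2_eq_of_activeGraph_adj hab
      single_sub_single_mem_span_constrFamily hq (by simp) hqe
  have hs : Pi.single s 1 ∈ span ℚ (constrFamily s t A '' {.inl 1}ᶜ) :=
    subset_span ⟨.inl 0, by simp, rfl⟩
  exact hli.notMem_span_image (x := .inl 1) (s := {.inl 1}ᶜ) (by simp)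
    (by simpa [constrFamily] using add_mem hst hs)

theorem isAcyclic_activeGraph (hli : LinearIndependent ℚ (constrFamily s t A)) :
    (activeGraph A).IsAcyclic := by
  rw [isAcyclic_iff_forall_adj_isBridge]
  intro v w hvw
  obtain ⟨q, hq, hqe⟩ := exists_mem_sym2_eq_of_activeGraph_adj hvw
  rw [← hqe, isBridge_iff]
  intro h
  refine hli.notMem_span_image (x := .inr ⟨q, hq⟩) (s := {.inr ⟨q, hq⟩}ᶜ) (by simp) ?_
  refine h.single_sub_single_mem fun a b hab ↦ ?_
  obtain ⟨hab, hne⟩ := deleteEdges_adj.1 hab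
  obtain ⟨q', hq', hqe'⟩ := exists_mem_sym2_eq_of_activeGraph_adj hab
  refine single_sub_single_mem_span_constrFamily hq' ?_ hqe'
  rintro ⟨⟩
  exact hne (by simp [← hqe'])

theorem reachable_or_reachable_of_span_constrFamily_eq_top [Fintype V]
    (hspan : span ℚ (Set.range (constrFamily s t A)) = ⊤) (v : V) :
    (activeGraph A).Reachable s v ∨ (activeGraph A).Reachable t v := by
  classical
  by_contra! hv
  set C := Finset.univ.filter ((activeGraph A).Reachable v)
  let φ : (V → ℚ) →ₗ[ℚ] ℚ := ∑ u ∈ C, LinearMap.proj u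
  have hφ : ∀ a, φ (Pi.single a 1) = if a ∈ C then 1 else 0 := by
    intro a
    simp [φ, Finset.sum_pi_single']
  have hker : Set.range (constrFamily s t A) ⊆ LinearMap.ker φ := by
    rintro _ ⟨i | ⟨q, hq⟩, rfl⟩
    · fin_cases i <;> simp [constrFamily, hφ, C, reachable_comm, hv]
    · have hC : q.1 ∈ C ↔ q.2 ∈ C := by
        simp only [C, Finset.mem_filter, Finset.mem_univ, true_and]
        exact ⟨fun h ↦ h.trans (activeGraph_reachable_of_mem hq),
          fun h ↦ h.trans (activeGraph_reachable_of_mem hq).symm⟩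
      simp [constrFamily, hφ, hC]
  have hvC : Pi.single v 1 ∈ LinearMap.ker φ := span_le.2 hker (hspan ▸ mem_top)
  simp [hφ, C] at hvC

end ActiveGraph

theorem active_graph_two_trees_general {V : Type*} [Fintype V] [DecidableEq V]
    (E : V → V → Prop) (s t : V) (y : V → ℚ) (A : Finset (V × V)) (hA : DefiningSystem E s t A y) :
    ¬ (activeGraph A).Reachable s t ∧
      (activeGraph A).IsAcyclic ∧
      ∀ v : V, (activeGraph A).Reachable s v ∨ (activeGraph A).Reachable t v := by
  obtain ⟨-, -, hcard, hli⟩ := hA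
  have hspan := hli.span_eq_top_of_card_eq_finrank <| by
    rw [Module.finrank_pi, Fintype.card_sum, Fintype.card_fin, Fintype.card_coe]
    omega
  exact ⟨not_reachable_activeGraph hli, isAcyclic_activeGraph hli,
    reachable_or_reachable_of_span_constrFamily_eq_top hspan⟩

/-- In any basic feasible solution of the ideal cut polytope, the active graph contains
no path joining `s` and `t`, and it consists of exactly two disjoint trees, one
containing `s` and one containing `t`, which together span all of `V`:
it is acyclic, `s` and `t` are not connected, and every vertex is connected
to `s` or to `t`. -/
theorem active_graph_two_trees {V : Type*} [Fintype V] [DecidableEq V]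
    (E : V → V → Prop) [DecidableRel E] (s t : V)
    (hacyc : Acyclic E) (hpath : EveryVertexOnPath E s t)
    (y : V → ℚ) (hy : LPFeasible E s t y)
    (A : Finset (V × V)) (hA : DefiningSystem E s t A y) :
    ¬ (activeGraph A).Reachable s t ∧
      (activeGraph A).IsAcyclic ∧
      ∀ v : V, (activeGraph A).Reachable s v ∨ (activeGraph A).Reachable t v :=
  active_graph_two_trees_general E s t y A hA
end

section
/- A feasible flow f is an optimal solution of the minimum s-t flow problem with lower bounds (minimize f_{ts} subject to conservation and f_{uv} ≥ w_{uv}) if and only if there is no directed path from t to s in the residual graph G_f. -/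
/-- Feasibility of a flow `f` for the minimum `s`-`t` flow problem with lower bounds:
`f` is supported on the edges of `E` together with the added return edge `t → s`,
satisfies conservation at every vertex, and `f_{uv} ≥ w_{uv}` on every edge of `E`. -/
def FeasibleFlow {V : Type*} [Fintype V] (E : V → V → Prop) (s t : V)
    (w : V → V → ℚ) (f : V → V → ℚ) : Prop :=
  (∀ u v, ¬ E u v → ¬ (u = t ∧ v = s) → f u v = 0) ∧
    (∀ v : V, ∑ u, f u v = ∑ u, f v u) ∧
    (∀ u v, E u v → w u v ≤ f u v)

/-- The residual graph of `f`: all forward edges of `E` (infinite capacity), and a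
reverse edge `vu` for every edge `uv ∈ E` with `f_{uv} > w_{uv}`. -/
def ResidualEdge {V : Type*} (E : V → V → Prop) (w f : V → V → ℚ) : V → V → Prop :=
  fun u v => E u v ∨ (E v u ∧ w v u < f v u)

open Filter Topology Finset

theorem exists_pos_mul_le_of_pos {𝕜 ι : Type*} [Field 𝕜] [LinearOrder 𝕜] [IsStrictOrderedRing 𝕜]
    [TopologicalSpace 𝕜] [OrderTopology 𝕜] [Finite ι] (a b : ι → 𝕜)
    (h : ∀ i, 0 < a i → 0 < b i) : ∃ ε > 0, ∀ i, 0 < a i → ε * a i ≤ b i := by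
  have hsmall : ∀ i, ∀ᶠ ε in 𝓝 (0 : 𝕜), 0 < a i → ε * a i ≤ b i := by
    intro i
    by_cases ha : 0 < a i
    · have hlim : Tendsto (fun ε => ε * a i) (𝓝 0) (𝓝 (0 * a i)) :=
        (continuous_id.mul continuous_const).tendsto 0
      rw [zero_mul] at hlim
      filter_upwards [hlim.eventually (ge_mem_nhds (h i ha))] with ε hε _ using hε
    · exact Eventually.of_forall fun _ h => absurd h ha
  exact (eventually_mem_nhdsWithin.and
    (nhdsWithin_le_nhds (eventually_all.2 hsmall))).exists (f := 𝓝[>] 0)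

theorem Acyclic.not_rel_of_reflTransGen {V : Type*} {E : V → V → Prop} {s t : V}
    (hacyc : Acyclic E) (hst : Relation.ReflTransGen E s t) : ¬ E t s :=
  fun hts => hacyc t (Relation.TransGen.head' hts hst)

section NetFlow

variable {V : Type*} [Fintype V]

def netFlow (g : V → V → ℚ) (v : V) : ℚ := ∑ u, g u v - ∑ u, g v u

def edgeIndicator [DecidableEq V] (a b : V) : V → V → ℚ :=
  fun u v => if u = a ∧ v = b then 1 else 0

theorem netFlow_add (g h : V → V → ℚ) (v : V) : netFlow (g + h) v = netFlow g v + netFlow h v := by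
  simp only [netFlow, Pi.add_apply, sum_add_distrib]
  ring

theorem netFlow_sub (g h : V → V → ℚ) (v : V) : netFlow (g - h) v = netFlow g v - netFlow h v := by
  simp only [netFlow, Pi.sub_apply, sum_sub_distrib]
  ring

theorem netFlow_neg (g : V → V → ℚ) (v : V) : netFlow (-g) v = -netFlow g v := by
  simp only [netFlow, Pi.neg_apply, sum_neg_distrib]
  ring

theorem netFlow_smul (c : ℚ) (g : V → V → ℚ) (v : V) : netFlow (c • g) v = c * netFlow g v := by
  simp only [netFlow, Pi.smul_apply, smul_eq_mul, ← mul_sum]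
  ring

theorem netFlow_edgeIndicator [DecidableEq V] (a b v : V) :
    netFlow (edgeIndicator a b) v = (if v = b then 1 else 0) - if v = a then 1 else 0 := by
  simp [netFlow, edgeIndicator, ite_and]

theorem netFlow_eq_zero_iff (g : V → V → ℚ) (v : V) :
    netFlow g v = 0 ↔ ∑ u, g u v = ∑ u, g v u :=
  sub_eq_zero

theorem sum_inflow_eq_sum_outflow [DecidableEq V] {g : V → V → ℚ} (hg : ∀ v, netFlow g v = 0)
    (S : Finset V) :
    ∑ v ∈ S, ∑ u ∈ Sᶜ, g u v = ∑ v ∈ S, ∑ u ∈ Sᶜ, g v u := by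
  have hS : ∑ v ∈ S, ∑ u, g u v = ∑ v ∈ S, ∑ u, g v u :=
    sum_congr rfl fun v _ => (netFlow_eq_zero_iff g v).1 (hg v)
  have hinner : ∑ v ∈ S, ∑ u ∈ S, g u v = ∑ v ∈ S, ∑ u ∈ S, g v u := sum_comm
  simp only [← sum_add_sum_compl S, sum_add_distrib] at hS
  linarith

theorem FeasibleFlow.netFlow_eq_zero {E : V → V → Prop} {s t : V} {w f : V → V → ℚ}
    (hf : FeasibleFlow E s t w f) (v : V) : netFlow f v = 0 :=
  (netFlow_eq_zero_iff f v).2 (hf.2.1 v)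

end NetFlow

section Flows

variable {V : Type*} [Fintype V] [DecidableEq V] {E : V → V → Prop} {s t : V} {w f : V → V → ℚ}

/-- A unit `a`-`b` flow that the residual graph of `f` can carry: it may use edges of `E`
forwards freely, and backwards (negatively) only where `f` exceeds its lower bound. -/
structure IsResidualUnitFlow (E : V → V → Prop) (w f : V → V → ℚ) (a b : V)
    (c : V → V → ℚ) : Prop where
  support : ∀ u v, ¬ E u v → c u v = 0
  netFlow_eq : ∀ v, netFlow c v = (if v = b then 1 else 0) - if v = a then 1 else 0
  slack : ∀ u v, c u v < 0 → w u v < f u v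

theorem exists_isResidualUnitFlow_of_residualEdge {a b : V} (h : ResidualEdge E w f a b) :
    ∃ c, IsResidualUnitFlow E w f a b c := by
  rcases h with hab | ⟨hba, hslack⟩
  · refine ⟨edgeIndicator a b, ⟨?_, netFlow_edgeIndicator a b, ?_⟩⟩
    · rintro u v huv
      simp only [edgeIndicator, ite_eq_right_iff, one_ne_zero, imp_false, not_and]
      rintro rfl rfl
      exact huv hab
    · intro u v hneg
      simp only [edgeIndicator] at hneg
      split_ifs at hneg <;> norm_num at hneg
  · refine ⟨-edgeIndicator b a, ⟨?_, fun v => ?_, ?_⟩⟩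
    · rintro u v huv
      simp only [Pi.neg_apply, edgeIndicator, neg_eq_zero, ite_eq_right_iff, one_ne_zero,
        imp_false, not_and]
      rintro rfl rfl
      exact huv hba
    · rw [netFlow_neg, netFlow_edgeIndicator]
      ring
    · intro u v hneg
      simp only [Pi.neg_apply, edgeIndicator] at hneg
      split_ifs at hneg with huv
      · obtain ⟨rfl, rfl⟩ := huv
        exact hslack
      · norm_num at hneg

theorem IsResidualUnitFlow.add {a b d : V} {c₁ c₂ : V → V → ℚ}
    (h₁ : IsResidualUnitFlow E w f a b c₁) (h₂ : IsResidualUnitFlow E w f b d c₂) :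
    IsResidualUnitFlow E w f a d (c₁ + c₂) where
  support u v huv := by simp [h₁.support u v huv, h₂.support u v huv]
  netFlow_eq v := by
    rw [netFlow_add, h₁.netFlow_eq, h₂.netFlow_eq]
    ring
  slack u v hneg := by
    rcases lt_or_ge (c₁ u v) 0 with h | h
    · exact h₁.slack u v h
    · exact h₂.slack u v (by simp only [Pi.add_apply] at hneg; linarith)

theorem exists_isResidualUnitFlow {a b : V} (h : Relation.TransGen (ResidualEdge E w f) a b) :
    ∃ c, IsResidualUnitFlow E w f a b c := by
  induction h with
  | single hab => exact exists_isResidualUnitFlow_of_residualEdge hab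
  | tail _ hbd ih =>
    obtain ⟨c₁, h₁⟩ := ih
    obtain ⟨c₂, h₂⟩ := exists_isResidualUnitFlow_of_residualEdge hbd
    exact ⟨c₁ + c₂, h₁.add h₂⟩

theorem FeasibleFlow.augment {c : V → V → ℚ} {ε : ℚ} (hf : FeasibleFlow E s t w f)
    (hc : IsResidualUnitFlow E w f t s c) (hts : ¬ E t s) (hε : 0 ≤ ε)
    (hεc : ∀ u v, 0 < -c u v → ε * -c u v ≤ f u v - w u v) :
    FeasibleFlow E s t w (f + ε • (c - edgeIndicator t s)) := by
  refine ⟨fun u v huv hret => ?_, fun v => ?_, fun u v huv => ?_⟩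
  · simp [edgeIndicator, hf.1 u v huv hret, hc.support u v huv, hret]
  · rw [← netFlow_eq_zero_iff, netFlow_add, netFlow_smul, netFlow_sub, hc.netFlow_eq,
      netFlow_edgeIndicator, hf.netFlow_eq_zero]
    ring
  · have hret : ¬ (u = t ∧ v = s) := by
      rintro ⟨rfl, rfl⟩
      exact hts huv
    simp only [Pi.add_apply, Pi.smul_apply, Pi.sub_apply, edgeIndicator, if_neg hret,
      sub_zero, smul_eq_mul]
    rcases lt_or_ge (c u v) 0 with hneg | hnonneg
    · linarith [hεc u v (neg_pos.2 hneg)]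
    · nlinarith [hf.2.2 u v huv]

theorem FeasibleFlow.sum_outflow_eq (hf : FeasibleFlow E s t w f) {S : Finset V} (ht : t ∈ S)
    (hs : s ∉ S) (hS : ∀ v ∈ S, ∀ u ∉ S, ¬ E v u) :
    ∑ v ∈ S, ∑ u ∈ Sᶜ, f v u = f t s := by
  rw [sum_eq_single_of_mem t ht, sum_eq_single_of_mem s (mem_compl.2 hs)]
  · intro u hu hus
    exact hf.1 t u (hS t ht u (mem_compl.1 hu)) fun h => hus h.2
  · intro v hv hvt
    exact sum_eq_zero fun u hu => hf.1 v u (hS v hv u (mem_compl.1 hu)) fun h => hvt h.1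

theorem FeasibleFlow.apply_le_of_residualClosed {f' : V → V → ℚ} (hf : FeasibleFlow E s t w f)
    (hf' : FeasibleFlow E s t w f') {S : Finset V} (ht : t ∈ S) (hs : s ∉ S)
    (hS : ∀ v ∈ S, ∀ u, ResidualEdge E w f v u → u ∈ S) : f t s ≤ f' t s := by
  have hE : ∀ v ∈ S, ∀ u ∉ S, ¬ E v u := fun v hv u hu huv => hu (hS v hv u (Or.inl huv))
  have hinflow : ∀ v ∈ S, ∀ u ∈ Sᶜ, f u v ≤ f' u v := by
    intro v hv u hu
    have hut : ¬ (u = t ∧ v = s) := fun h => mem_compl.1 hu (h.1 ▸ ht)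
    by_cases huv : E u v
    · have hsat : f u v ≤ w u v :=
        le_of_not_gt fun h => mem_compl.1 hu (hS v hv u (Or.inr ⟨huv, h⟩))
      exact hsat.trans (hf'.2.2 u v huv)
    · rw [hf.1 u v huv hut, hf'.1 u v huv hut]
  calc f t s = ∑ v ∈ S, ∑ u ∈ Sᶜ, f v u := (hf.sum_outflow_eq ht hs hE).symm
    _ = ∑ v ∈ S, ∑ u ∈ Sᶜ, f u v := (sum_inflow_eq_sum_outflow hf.netFlow_eq_zero S).symm
    _ ≤ ∑ v ∈ S, ∑ u ∈ Sᶜ, f' u v := sum_le_sum fun v hv => sum_le_sum (hinflow v hv)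
    _ = ∑ v ∈ S, ∑ u ∈ Sᶜ, f' v u := sum_inflow_eq_sum_outflow hf'.netFlow_eq_zero S
    _ = f' t s := hf'.sum_outflow_eq ht hs hE

end Flows

/-- A feasible flow `f` is optimal for the minimum `s`-`t` flow problem with lower
bounds (minimize `f_{ts}`) iff there is no directed path from `t` to `s` in the
residual graph `G_f`. -/
theorem min_flow_optimality {V : Type*} [Fintype V] (E : V → V → Prop) (s t : V)
    (hst : s ≠ t) (hacyc : Acyclic E) (hpath : EveryVertexOnPath E s t)
    (w : V → V → ℚ) (f : V → V → ℚ) (hf : FeasibleFlow E s t w f) :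
    (∀ f' : V → V → ℚ, FeasibleFlow E s t w f' → f t s ≤ f' t s) ↔
      ¬ Relation.TransGen (ResidualEdge E w f) t s := by
  classical
  have hts : ¬ E t s := hacyc.not_rel_of_reflTransGen (hpath s).2
  constructor
  · intro hopt hres
    obtain ⟨c, hc⟩ := exists_isResidualUnitFlow hres
    obtain ⟨ε, hε, hεc⟩ := exists_pos_mul_le_of_pos (fun p : V × V => -c p.1 p.2)
      (fun p => f p.1 p.2 - w p.1 p.2) fun p hp => sub_pos.2 (hc.slack _ _ (neg_pos.1 hp))
    have hle := hopt _ (hf.augment hc hts hε.le fun u v => hεc (u, v))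
    simp only [Pi.add_apply, Pi.smul_apply, Pi.sub_apply, hc.support t s hts, edgeIndicator,
      and_self, if_true, zero_sub, smul_eq_mul, mul_neg, mul_one, le_add_iff_nonneg_right,
      Left.nonneg_neg_iff] at hle
    exact hle.not_gt hε
  · intro hno f' hf'
    refine hf.apply_le_of_residualClosed hf'
      (S := univ.filter (Relation.ReflTransGen (ResidualEdge E w f) t)) ?_ ?_ ?_
    · exact mem_filter.2 ⟨mem_univ t, .refl⟩
    · simpa [Relation.reflTransGen_iff_eq_or_transGen, hst] using hno
    · intro v hv u hvu
      simp only [mem_filter, mem_univ, true_and] at hv ⊢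
      exact hv.tail hvu
end

section
/- The set of maximum weight stable matchings forms a sublattice of the distributive lattice of all stable matchings: if M and M' both maximize Σ_{bg ∈ M} w_{bg} over stable matchings, then so do M ∨ M' and M ∧ M'. -/
/-- `rB b g` is the rank boy `b` gives girl `g` (smaller = more preferred), and
`rG g b` the rank girl `g` gives boy `b`.  A matching (bijection) `M` is stable if
no pair `(b, g)` prefer each other to their partners. -/
def StableM {B G : Type*} (rB : B → G → ℕ) (rG : G → B → ℕ) (M : B ≃ G) : Prop :=
  ∀ (b : B) (g : G), ¬ (rB b g < rB b (M b) ∧ rG g b < rG g (M.symm g))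

/-- The total weight of a matching. -/
def matchWeight {B G : Type*} [Fintype B] (w : B → G → ℚ) (M : B ≃ G) : ℚ :=
  ∑ b, w b (M b)

/-- A maximum weight stable matching. -/
def MaxWtStable {B G : Type*} [Fintype B] (rB : B → G → ℕ) (rG : G → B → ℕ)
    (w : B → G → ℚ) (M : B ≃ G) : Prop :=
  StableM rB rG M ∧ ∀ N : B ≃ G, StableM rB rG N → matchWeight w N ≤ matchWeight w M

/-- If `M b1 = M' b2 = γ` with `b1 ≠ b2` and both boys strictly prefer `γ` over
their partner in the other matching, then one of `M`, `M'` is unstable. -/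
private lemma stable_clash {B G : Type*} (rB : B → G → ℕ) (rG : G → B → ℕ)
    (hrG : ∀ g, Function.Injective (rG g))
    (M M' : B ≃ G) (hM : StableM rB rG M) (hM' : StableM rB rG M')
    {b1 b2 : B} {γ : G} (hne : b1 ≠ b2)
    (h1 : M b1 = γ) (h2 : M' b2 = γ)
    (p1 : rB b1 γ < rB b1 (M' b1)) (p2 : rB b2 γ < rB b2 (M b2)) : False := by
  have hgne : rG γ b1 ≠ rG γ b2 := fun h => hne (hrG γ h)
  have hb2 : M'.symm γ = b2 := by rw [← h2, Equiv.symm_apply_apply]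
  have hb1 : M.symm γ = b1 := by rw [← h1, Equiv.symm_apply_apply]
  rcases hgne.lt_or_gt with h | h
  · exact hM' b1 γ ⟨p1, by rwa [hb2]⟩
  · exact hM b2 γ ⟨p2, by rwa [hb1]⟩

/-- The maximum weight stable matchings form a sublattice of the lattice of stable
matchings: if `M` and `M'` are maximum weight stable matchings then so are
`M ∧ M'` (each boy gets the better of his two partners) and `M ∨ M'` (each boy gets
the worse of his two partners). -/
theorem maxWtStable_sublattice {B G : Type*} [Fintype B] [Fintype G]
    [DecidableEq B] [DecidableEq G]
    (rB : B → G → ℕ) (rG : G → B → ℕ)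
    (hrB : ∀ b, Function.Injective (rB b)) (hrG : ∀ g, Function.Injective (rG g))
    (w : B → G → ℚ) (M M' : B ≃ G)
    (hM : MaxWtStable rB rG w M) (hM' : MaxWtStable rB rG w M') :
    ∃ Mmeet Mjoin : B ≃ G,
      (∀ b, Mmeet b = if rB b (M b) ≤ rB b (M' b) then M b else M' b) ∧
      (∀ b, Mjoin b = if rB b (M b) ≤ rB b (M' b) then M' b else M b) ∧
      MaxWtStable rB rG w Mmeet ∧ MaxWtStable rB rG w Mjoin := by
  classical
  obtain ⟨hMs, hMmax⟩ := hM
  obtain ⟨hM's, hM'max⟩ := hM'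
  have hcard : Fintype.card B = Fintype.card G := Fintype.card_congr M
  have key : ∀ (X : B ≃ G) (x : B) (γ : G), X x = γ → X.symm γ = x := by
    intro X x γ h
    rw [← h, Equiv.symm_apply_apply]
  set f : B → G := fun b => if rB b (M b) ≤ rB b (M' b) then M b else M' b with hfdef
  set j : B → G := fun b => if rB b (M b) ≤ rB b (M' b) then M' b else M b with hjdef
  have hfj : ∀ b, (f b = M b ∧ j b = M' b) ∨ (f b = M' b ∧ j b = M b) := by
    intro b
    by_cases h : rB b (M b) ≤ rB b (M' b)
    · left; constructor <;> simp [hfdef, hjdef, h]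
    · right; constructor <;> simp [hfdef, hjdef, h]
  have hfM : ∀ b, rB b (f b) ≤ rB b (M b) ∧ rB b (f b) ≤ rB b (M' b) := by
    intro b
    by_cases h : rB b (M b) ≤ rB b (M' b)
    · refine ⟨?_, ?_⟩ <;> simp [hfdef, h]
    · refine ⟨?_, ?_⟩ <;> simp [hfdef, h]
      exact le_of_not_ge h
  have hjM : ∀ b, rB b (M b) ≤ rB b (j b) ∧ rB b (M' b) ≤ rB b (j b) := by
    intro b
    by_cases h : rB b (M b) ≤ rB b (M' b)
    · refine ⟨?_, ?_⟩ <;> simp [hjdef, h]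
    · refine ⟨?_, ?_⟩ <;> simp [hjdef, h]
      exact le_of_not_ge h
  -- Injectivity of the meet map
  have hfinj : Function.Injective f := by
    intro b1 b2 heq
    by_contra hne
    rcases hfj b1 with ⟨e1, _⟩ | ⟨e1, _⟩ <;> rcases hfj b2 with ⟨e2, _⟩ | ⟨e2, _⟩
    · exact hne (M.injective (by rw [← e1, ← e2, heq]))
    · -- f b1 = M b1, f b2 = M' b2
      have h2 : M' b2 = M b1 := by rw [← e2, ← heq, e1]
      have p1 : rB b1 (M b1) < rB b1 (M' b1) := by
        refine lt_of_le_of_ne (by rw [← e1]; exact (hfM b1).2) (fun h => hne ?_)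
        exact M'.injective ((hrB b1 h).symm.trans h2.symm)
      have p2 : rB b2 (M b1) < rB b2 (M b2) := by
        refine lt_of_le_of_ne ?_ (fun h => hne (M.injective (hrB b2 h)))
        rw [← h2, ← e2]; exact (hfM b2).1
      exact stable_clash rB rG hrG M M' hMs hM's hne rfl h2 p1 p2
    · -- f b1 = M' b1, f b2 = M b2
      have h2 : M b2 = M' b1 := by rw [← e2, ← heq, e1]
      have p1 : rB b1 (M' b1) < rB b1 (M b1) := by
        refine lt_of_le_of_ne (by rw [← e1]; exact (hfM b1).1) (fun h => hne ?_)
        exact M.injective ((hrB b1 h).symm.trans h2.symm)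
      have p2 : rB b2 (M' b1) < rB b2 (M' b2) := by
        refine lt_of_le_of_ne ?_ (fun h => hne (M'.injective (hrB b2 h)))
        rw [← h2, ← e2]; exact (hfM b2).2
      exact stable_clash rB rG hrG M' M hM's hMs hne rfl h2 p1 p2
    · exact hne (M'.injective (by rw [← e1, ← e2, heq]))
  let Emeet : B ≃ G :=
    Equiv.ofBijective f ((Fintype.bijective_iff_injective_and_card f).mpr ⟨hfinj, hcard⟩)
  have hEm : ∀ b, Emeet b = f b := fun b => rfl
  have hEmsymm : ∀ γ, f (Emeet.symm γ) = γ := fun γ => Emeet.apply_symm_apply γ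
  -- Injectivity of the join map, via surjectivity of the meet map
  have hjinj : Function.Injective j := by
    intro b1 b2 heq
    by_contra hne
    rcases hfj b1 with ⟨e1, e1'⟩ | ⟨e1, e1'⟩ <;> rcases hfj b2 with ⟨e2, e2'⟩ | ⟨e2, e2'⟩
    · exact hne (M'.injective (by rw [← e1', ← e2', heq]))
    · -- j b1 = M' b1, j b2 = M b2 ; γ = M' b1 = M b2
      have h2 : M b2 = M' b1 := e2'.symm.trans (heq.symm.trans e1')
      have hf3 := hEmsymm (M' b1)
      rcases hfj (Emeet.symm (M' b1)) with ⟨e3, _⟩ | ⟨e3, _⟩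
      · have hb3 : Emeet.symm (M' b1) = b2 :=
          M.injective ((e3.symm.trans hf3).trans h2.symm)
        have hfb2 : f b2 = M' b1 := (congrArg f hb3).symm.trans hf3
        exact hne (M'.injective (e2.symm.trans hfb2)).symm
      · have hb3 : Emeet.symm (M' b1) = b1 := M'.injective (e3.symm.trans hf3)
        have hfb1 : f b1 = M' b1 := (congrArg f hb3).symm.trans hf3
        exact hne (M.injective ((e1.symm.trans hfb1).trans h2.symm))
    · -- j b1 = M b1, j b2 = M' b2 ; γ = M b1 = M' b2
      have h2 : M' b2 = M b1 := e2'.symm.trans (heq.symm.trans e1')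
      have hf3 := hEmsymm (M b1)
      rcases hfj (Emeet.symm (M b1)) with ⟨e3, _⟩ | ⟨e3, _⟩
      · have hb3 : Emeet.symm (M b1) = b1 := M.injective (e3.symm.trans hf3)
        have hfb1 : f b1 = M b1 := (congrArg f hb3).symm.trans hf3
        exact hne (M'.injective (h2.trans (e1.symm.trans hfb1).symm)).symm
      · have hb3 : Emeet.symm (M b1) = b2 :=
          M'.injective ((e3.symm.trans hf3).trans h2.symm)
        have hfb2 : f b2 = M b1 := (congrArg f hb3).symm.trans hf3
        exact hne (M.injective (e2.symm.trans hfb2)).symm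
    · exact hne (M.injective (by rw [← e1', ← e2', heq]))
  let Ejoin : B ≃ G :=
    Equiv.ofBijective j ((Fintype.bijective_iff_injective_and_card j).mpr ⟨hjinj, hcard⟩)
  have hEj : ∀ b, Ejoin b = j b := fun b => rfl
  have hEjsymm : ∀ γ, j (Ejoin.symm γ) = γ := fun γ => Ejoin.apply_symm_apply γ
  -- Stability of the meet
  have hmeet_st : StableM rB rG Emeet := by
    rintro b γ ⟨hb, hg⟩
    rw [hEm] at hb
    have hb1 : rB b γ < rB b (M b) := lt_of_lt_of_le hb (hfM b).1
    have hb2 : rB b γ < rB b (M' b) := lt_of_lt_of_le hb (hfM b).2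
    have hf3 := hEmsymm γ
    rcases hfj (Emeet.symm γ) with ⟨e3, _⟩ | ⟨e3, _⟩
    · have h3 : M.symm γ = Emeet.symm γ := key M _ _ (e3.symm.trans hf3)
      exact hMs b γ ⟨hb1, by rwa [h3]⟩
    · have h3 : M'.symm γ = Emeet.symm γ := key M' _ _ (e3.symm.trans hf3)
      exact hM's b γ ⟨hb2, by rwa [h3]⟩
  -- Each girl gets her worse partner in the meet
  have hworse : ∀ γ : G,
      rG γ (M.symm γ) ≤ rG γ (Emeet.symm γ) ∧ rG γ (M'.symm γ) ≤ rG γ (Emeet.symm γ) := by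
    intro γ
    have hf3 := hEmsymm γ
    rcases hfj (Emeet.symm γ) with ⟨e3, _⟩ | ⟨e3, _⟩
    · have hM3 : M (Emeet.symm γ) = γ := e3.symm.trans hf3
      have hsymm : M.symm γ = Emeet.symm γ := key M _ _ hM3
      refine ⟨le_of_eq (by rw [hsymm]), ?_⟩
      by_contra hlt
      push_neg at hlt
      have hne3 : γ ≠ M' (Emeet.symm γ) := by
        intro h
        have h' : M'.symm γ = Emeet.symm γ := key M' _ _ h.symm
        rw [h'] at hlt
        exact lt_irrefl _ hlt
      have hle : rB (Emeet.symm γ) γ < rB (Emeet.symm γ) (M' (Emeet.symm γ)) := by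
        refine lt_of_le_of_ne ?_ (fun h => hne3 (hrB _ h))
        have h4 := (hfM (Emeet.symm γ)).2
        rwa [hf3] at h4
      exact hM's (Emeet.symm γ) γ ⟨hle, hlt⟩
    · have hM3 : M' (Emeet.symm γ) = γ := e3.symm.trans hf3
      have hsymm : M'.symm γ = Emeet.symm γ := key M' _ _ hM3
      refine ⟨?_, le_of_eq (by rw [hsymm])⟩
      by_contra hlt
      push_neg at hlt
      have hne3 : γ ≠ M (Emeet.symm γ) := by
        intro h
        have h' : M.symm γ = Emeet.symm γ := key M _ _ h.symm
        rw [h'] at hlt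
        exact lt_irrefl _ hlt
      have hle : rB (Emeet.symm γ) γ < rB (Emeet.symm γ) (M (Emeet.symm γ)) := by
        refine lt_of_le_of_ne ?_ (fun h => hne3 (hrB _ h))
        have h4 := (hfM (Emeet.symm γ)).1
        rwa [hf3] at h4
      exact hMs (Emeet.symm γ) γ ⟨hle, hlt⟩
  -- Each girl gets her better partner in the join
  have hjsymm : ∀ γ : G,
      rG γ (Ejoin.symm γ) ≤ rG γ (M.symm γ) ∧ rG γ (Ejoin.symm γ) ≤ rG γ (M'.symm γ) := by
    intro γ
    have hjj := hEjsymm γ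
    have hmm := hEmsymm γ
    by_cases hsame : M.symm γ = M'.symm γ
    · have hMx : M (M.symm γ) = γ := M.apply_symm_apply γ
      have hM'x : M' (M.symm γ) = γ := by rw [hsame]; exact M'.apply_symm_apply γ
      have hjx : j (M.symm γ) = γ := by
        rcases hfj (M.symm γ) with ⟨_, e⟩ | ⟨_, e⟩ <;> rw [e] <;> assumption
      have hbj : Ejoin.symm γ = M.symm γ := hjinj (by rw [hjj, hjx])
      constructor
      · exact le_of_eq (by rw [hbj])
      · exact le_of_eq (by rw [hbj, hsame])
    · have hbjmem : Ejoin.symm γ = M.symm γ ∨ Ejoin.symm γ = M'.symm γ := by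
        rcases hfj (Ejoin.symm γ) with ⟨_, e⟩ | ⟨_, e⟩
        · exact Or.inr (key M' _ _ (e.symm.trans hjj)).symm
        · exact Or.inl (key M _ _ (e.symm.trans hjj)).symm
      have hbmmem : Emeet.symm γ = M.symm γ ∨ Emeet.symm γ = M'.symm γ := by
        rcases hfj (Emeet.symm γ) with ⟨e, _⟩ | ⟨e, _⟩
        · exact Or.inl (key M _ _ (e.symm.trans hmm)).symm
        · exact Or.inr (key M' _ _ (e.symm.trans hmm)).symm
      have hnebjbm : Ejoin.symm γ ≠ Emeet.symm γ := by
        intro h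
        rcases hfj (Ejoin.symm γ) with ⟨e1, e2⟩ | ⟨e1, e2⟩
        · apply hsame
          have h1 : M (Ejoin.symm γ) = γ := e1.symm.trans (by rw [h]; exact hmm)
          have h2 : M' (Ejoin.symm γ) = γ := e2.symm.trans hjj
          exact (key M _ _ h1).trans (key M' _ _ h2).symm
        · apply hsame
          have h1 : M' (Ejoin.symm γ) = γ := e1.symm.trans (by rw [h]; exact hmm)
          have h2 : M (Ejoin.symm γ) = γ := e2.symm.trans hjj
          exact (key M _ _ h2).trans (key M' _ _ h1).symm
      rcases hbjmem with h1 | h1 <;> rcases hbmmem with h2 | h2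
      · exact absurd (h1.trans h2.symm) hnebjbm
      · refine ⟨le_of_eq (by rw [h1]), ?_⟩
        calc rG γ (Ejoin.symm γ) = rG γ (M.symm γ) := by rw [h1]
          _ ≤ rG γ (Emeet.symm γ) := (hworse γ).1
          _ = rG γ (M'.symm γ) := by rw [h2]
      · refine ⟨?_, le_of_eq (by rw [h1])⟩
        calc rG γ (Ejoin.symm γ) = rG γ (M'.symm γ) := by rw [h1]
          _ ≤ rG γ (Emeet.symm γ) := (hworse γ).2
          _ = rG γ (M.symm γ) := by rw [h2]
      · exact absurd (h1.trans h2.symm) hnebjbm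
  -- Stability of the join
  have hjoin_st : StableM rB rG Ejoin := by
    rintro b γ ⟨hb, hg⟩
    rw [hEj] at hb
    have hg1 : rG γ b < rG γ (M.symm γ) := lt_of_lt_of_le hg (hjsymm γ).1
    have hg2 : rG γ b < rG γ (M'.symm γ) := lt_of_lt_of_le hg (hjsymm γ).2
    rcases hfj b with ⟨_, e⟩ | ⟨_, e⟩
    · exact hM's b γ ⟨by rw [← e]; exact hb, hg2⟩
    · exact hMs b γ ⟨by rw [← e]; exact hb, hg1⟩
  -- Weights
  have hWeq : matchWeight w M' = matchWeight w M := le_antisymm (hMmax M' hM's) (hM'max M hMs)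
  have hsum : matchWeight w Emeet + matchWeight w Ejoin
      = matchWeight w M + matchWeight w M' := by
    unfold matchWeight
    rw [← Finset.sum_add_distrib, ← Finset.sum_add_distrib]
    refine Finset.sum_congr rfl fun b _ => ?_
    rcases hfj b with ⟨e1, e2⟩ | ⟨e1, e2⟩
    · show w b (f b) + w b (j b) = _
      rw [e1, e2]
    · show w b (f b) + w b (j b) = _
      rw [e1, e2, add_comm]
  have h1 : matchWeight w Emeet ≤ matchWeight w M := hMmax Emeet hmeet_st
  have h2 : matchWeight w Ejoin ≤ matchWeight w M := hMmax Ejoin hjoin_st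
  have hmW : matchWeight w Emeet = matchWeight w M := by linarith
  have hjW : matchWeight w Ejoin = matchWeight w M := by linarith
  exact ⟨Emeet, Ejoin, fun b => rfl, fun b => rfl,
    ⟨hmeet_st, fun N hN => hmW ▸ hMmax N hN⟩,
    ⟨hjoin_st, fun N hN => hjW ▸ hMmax N hN⟩⟩
end

section
/- For any boy b and girl g, at most one rotation moves b to g (i.e., makes g become b's partner) and at most one rotation moves b from g; moreover, if ρ₁ moves b to g and ρ₂ moves b from g, then ρ₁ strictly precedes ρ₂ in the rotation poset. -/
/-- A rotation: a cyclic sequence of `r ≥ 2` distinct pairs `(b_i, g_i)`.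
Indices live in `ZMod r` so that `i + 1` wraps around. -/
structure Rotation (B G : Type*) where
  r : ℕ
  two_le : 2 ≤ r
  bs : ZMod r → B
  gs : ZMod r → G
  inj_bs : Function.Injective bs
  inj_gs : Function.Injective gs

/-- `ρ` is exposed in `M`: each `b_i` is matched to `g_i`, and `g_{i+1} = s_M(b_i)` is
the first girl on `b_i`'s list preferring `b_i` to her `M`-partner. -/
def Exposed {B G : Type*} (rB : B → G → ℕ) (rG : G → B → ℕ) (M : B ≃ G)
    (ρ : Rotation B G) : Prop :=
  (∀ i, M (ρ.bs i) = ρ.gs i) ∧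
    (∀ i, rG (ρ.gs (i + 1)) (ρ.bs i) < rG (ρ.gs (i + 1)) (M.symm (ρ.gs (i + 1)))) ∧
    (∀ i, ∀ g : G, rB (ρ.bs i) g < rB (ρ.bs i) (ρ.gs (i + 1)) →
      ¬ (rG g (ρ.bs i) < rG g (M.symm g)))

/-- `M'` results from `M` by eliminating the rotation `ρ` (exposed in `M`):
each `b_i` moves from `g_i` to `g_{i+1}`, everyone else keeps their partner. -/
def Eliminates {B G : Type*} (rB : B → G → ℕ) (rG : G → B → ℕ)
    (M : B ≃ G) (ρ : Rotation B G) (M' : B ≃ G) : Prop :=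
  Exposed rB rG M ρ ∧ (∀ i, M' (ρ.bs i) = ρ.gs (i + 1)) ∧
    ∀ b : B, (∀ i, b ≠ ρ.bs i) → M' b = M b

/-- `ElimChain rB rG M L M'`: the list `L` of rotations can be eliminated one after
another starting from `M` and ending at `M'`. -/
def ElimChain {B G : Type*} (rB : B → G → ℕ) (rG : G → B → ℕ) :
    (B ≃ G) → List (Rotation B G) → (B ≃ G) → Prop
  | M, [], M' => M = M'
  | M, ρ :: L, M' => ∃ N : B ≃ G, Eliminates rB rG M ρ N ∧ ElimChain rB rG N L M'

/-- The boy-optimal stable matching. -/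
def BoyOptimal {B G : Type*} (rB : B → G → ℕ) (rG : G → B → ℕ) (M₀ : B ≃ G) : Prop :=
  StableM rB rG M₀ ∧ ∀ M : B ≃ G, StableM rB rG M → ∀ b, rB b (M₀ b) ≤ rB b (M b)

/-- The girl-optimal stable matching. -/
def GirlOptimal {B G : Type*} (rB : B → G → ℕ) (rG : G → B → ℕ) (Mz : B ≃ G) : Prop :=
  StableM rB rG Mz ∧ ∀ M : B ≃ G, StableM rB rG M → ∀ g, rG g (Mz.symm g) ≤ rG g (M.symm g)

/-- `ρ` is a rotation of the instance: it is exposed in some stable matching. -/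
def IsRotation {B G : Type*} (rB : B → G → ℕ) (rG : G → B → ℕ) (ρ : Rotation B G) : Prop :=
  ∃ M : B ≃ G, StableM rB rG M ∧ Exposed rB rG M ρ

/-- The set of pairs of a rotation (rotations are identified up to cyclic shift by
having equal pair sets). -/
def rotPairs {B G : Type*} (ρ : Rotation B G) : Set (B × G) :=
  {p | ∃ i, p = (ρ.bs i, ρ.gs i)}

/-- `ρ` moves `b` to `g`: after eliminating `ρ`, `b` is matched to `g`. -/
def MovesTo {B G : Type*} (ρ : Rotation B G) (b : B) (g : G) : Prop :=
  ∃ i, ρ.bs i = b ∧ ρ.gs (i + 1) = g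

/-- `ρ` moves `b` from `g`: before eliminating `ρ`, `b` is matched to `g`. -/
def MovesFrom {B G : Type*} (ρ : Rotation B G) (b : B) (g : G) : Prop :=
  ∃ i, ρ.bs i = b ∧ ρ.gs i = g

/-- `ρ'` precedes `ρ` in the rotation poset: `ρ'` is eliminated (up to cyclic shift)
in every sequence of eliminations from the boy-optimal matching `M₀` to a stable
matching in which `ρ` is exposed. -/
def Precedes {B G : Type*} (rB : B → G → ℕ) (rG : G → B → ℕ)
    (ρ' ρ : Rotation B G) : Prop :=
  ∀ (M₀ : B ≃ G) (L : List (Rotation B G)) (M : B ≃ G),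
    BoyOptimal rB rG M₀ → ElimChain rB rG M₀ L M → Exposed rB rG M ρ →
      ∃ ρ'' ∈ L, rotPairs ρ'' = rotPairs ρ'

section

variable {B G : Type*} {rB : B → G → ℕ} {rG : G → B → ℕ}

namespace Rotation

variable (ρ : Rotation B G)

instance : NeZero ρ.r := ⟨by have := ρ.two_le; omega⟩

theorem add_one_ne (i : ZMod ρ.r) : i + 1 ≠ i := by
  have : Fact (1 < ρ.r) := ⟨ρ.two_le⟩
  simp

theorem gs_add_one_ne (i : ZMod ρ.r) : ρ.gs (i + 1) ≠ ρ.gs i :=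
  ρ.inj_gs.ne (ρ.add_one_ne i)

theorem exists_add_natCast_eq (i m : ZMod ρ.r) : ∃ k : ℕ, i + k = m :=
  ⟨(m - i).val, by simp⟩

/-- The same cycle read from the girls' side: girl `g_{k+1}` moves from `b_k` up to `b_{k+1}`. -/
def dual : Rotation G B where
  r := ρ.r
  two_le := ρ.two_le
  bs k := ρ.gs (k + 1)
  gs := ρ.bs
  inj_bs := ρ.inj_gs.comp (add_left_injective 1)
  inj_gs := ρ.inj_bs

theorem movesFrom_dual_iff {b : B} {g : G} : MovesFrom ρ.dual g b ↔ MovesTo ρ b g := by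
  simp only [MovesFrom, MovesTo, dual, and_comm]

end Rotation

theorem StableM.symm {M : B ≃ G} (hM : StableM rB rG M) : StableM rG rB M.symm :=
  fun g b h => hM b g (by simpa [and_comm] using h)

theorem StableM.of_symm {M : G ≃ B} (hM : StableM rG rB M) : StableM rB rG M.symm := by
  simpa using hM.symm

section Exposed

variable {M : B ≃ G} {ρ : Rotation B G}

theorem Exposed.rank_lt_succ (hrB : ∀ b, Function.Injective (rB b)) (hM : StableM rB rG M)
    (he : Exposed rB rG M ρ) (i : ZMod ρ.r) :
    rB (ρ.bs i) (ρ.gs i) < rB (ρ.bs i) (ρ.gs (i + 1)) := by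
  have hne : rB (ρ.bs i) (ρ.gs (i + 1)) ≠ rB (ρ.bs i) (ρ.gs i) :=
    (hrB _).ne (ρ.gs_add_one_ne i)
  have hnot := hM (ρ.bs i) (ρ.gs (i + 1))
  rw [he.1 i] at hnot
  have := he.2.1 i
  omega

theorem Exposed.symm_apply_gs (he : Exposed rB rG M ρ) (i : ZMod ρ.r) :
    M.symm (ρ.gs i) = ρ.bs i := by
  rw [← he.1 i, Equiv.symm_apply_apply]

theorem Exposed.exists_eliminates (he : Exposed rB rG M ρ) : ∃ N, Eliminates rB rG M ρ N := by
  let shift : Equiv.Perm G := (Equiv.addRight 1).viaEmbedding ⟨ρ.gs, ρ.inj_gs⟩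
  refine ⟨M.trans shift, he, fun i => ?_, fun b hb => ?_⟩
  · simp only [Equiv.trans_apply, he.1 i, shift]
    exact Equiv.Perm.viaEmbedding_apply _ _ i
  · refine Equiv.Perm.viaEmbedding_apply_of_notMem _ _ _ ?_
    rintro ⟨i, hi⟩
    exact hb i (by simpa [← he.symm_apply_gs] using congrArg M.symm hi.symm)

end Exposed

section Eliminates

variable {M N : B ≃ G} {ρ : Rotation B G}

theorem Eliminates.symm_apply_gs_add_one (h : Eliminates rB rG M ρ N) (i : ZMod ρ.r) :
    N.symm (ρ.gs (i + 1)) = ρ.bs i := by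
  rw [← h.2.1 i, Equiv.symm_apply_apply]

theorem Eliminates.symm_apply_of_forall_ne (h : Eliminates rB rG M ρ N) {g : G}
    (hg : ∀ j, g ≠ ρ.gs j) : N.symm g = M.symm g := by
  rw [Equiv.symm_apply_eq, h.2.2 _ fun i hi => hg i ?_, Equiv.apply_symm_apply]
  rw [← h.1.1 i, ← hi, Equiv.apply_symm_apply]

theorem Eliminates.rank_symm_le (h : Eliminates rB rG M ρ N) (g : G) :
    rG g (N.symm g) ≤ rG g (M.symm g) := by
  by_cases hg : ∃ j, g = ρ.gs j
  · obtain ⟨j, rfl⟩ := hg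
    have hj := h.1.2.1 (j - 1)
    rw [sub_add_cancel] at hj
    rw [← sub_add_cancel j 1, h.symm_apply_gs_add_one, sub_add_cancel]
    exact hj.le
  · push Not at hg
    rw [h.symm_apply_of_forall_ne hg]

theorem Eliminates.stableM (hM : StableM rB rG M) (h : Eliminates rB rG M ρ N) :
    StableM rB rG N := by
  rintro b g ⟨hb, hg⟩
  replace hg := hg.trans_le (h.rank_symm_le g)
  by_cases hbρ : ∃ i, b = ρ.bs i
  · obtain ⟨i, rfl⟩ := hbρ
    rw [h.2.1 i] at hb
    exact h.1.2.2 i g hb hg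
  · push Not at hbρ
    rw [h.2.2 b hbρ] at hb
    exact hM b g ⟨hb, hg⟩

theorem Eliminates.exposed_dual (hrB : ∀ b, Function.Injective (rB b)) (hM : StableM rB rG M)
    (h : Eliminates rB rG M ρ N) : Exposed rG rB N.symm ρ.dual := by
  refine ⟨fun k => h.symm_apply_gs_add_one k, fun (k : ZMod ρ.r) => ?_,
    fun (k : ZMod ρ.r) b hb hbg => ?_⟩
  · show rB (ρ.bs (k + 1)) (ρ.gs (k + 1)) < rB (ρ.bs (k + 1)) (N (ρ.bs (k + 1)))
    rw [h.2.1]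
    exact h.1.rank_lt_succ hrB hM _
  · simp only [Rotation.dual, Equiv.symm_symm] at hb hbg
    rw [← h.1.symm_apply_gs] at hb
    by_cases hbρ : ∃ i, b = ρ.bs i
    · obtain ⟨i, rfl⟩ := hbρ
      rw [h.2.1 i] at hbg
      exact h.1.2.2 i _ hbg hb
    · push Not at hbρ
      rw [h.2.2 b hbρ] at hbg
      exact hM b _ ⟨hbg, hb⟩

end Eliminates

section Lattice

variable (hrB : ∀ b, Function.Injective (rB b)) (hrG : ∀ g, Function.Injective (rG g))
include hrB

theorem StableM.rank_symm_le_of_rank_le {M P : B ≃ G} (hP : StableM rB rG P)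
    (hle : ∀ b, rB b (M b) ≤ rB b (P b)) (g : G) : rG g (P.symm g) ≤ rG g (M.symm g) := by
  set m := M.symm g
  by_cases hm : P m = g
  · rw [← hm, Equiv.symm_apply_apply]
  · have hlt : rB m g < rB m (P m) :=
      lt_of_le_of_ne (M.apply_symm_apply g ▸ hle m) ((hrB m).ne (Ne.symm hm))
    exact not_lt.1 fun h => hP m g ⟨hlt, h⟩

include hrG

theorem StableM.eq_of_apply_eq {P Q : B ≃ G} (hP : StableM rB rG P) (hQ : StableM rB rG Q)
    {c c' : B} (hcc : P c = Q c') (hc : rB c (P c) ≤ rB c (Q c))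
    (hc' : rB c' (Q c') ≤ rB c' (P c')) : c = c' := by
  by_contra hne
  by_cases hPQ : P c = Q c
  · exact hne (Q.injective (hPQ.symm.trans hcc))
  have hlt : rB c (P c) < rB c (Q c) := lt_of_le_of_ne hc ((hrB c).ne hPQ)
  have hgirl : rG (P c) c' < rG (P c) c := by
    have := hQ c (P c)
    rw [hcc, Equiv.symm_apply_apply, ← hcc] at this
    have := (hrG (P c)).ne (Ne.symm hne)
    omega
  have hboy : rB c' (P c') ≤ rB c' (P c) := by
    have := hP c' (P c)
    rw [Equiv.symm_apply_apply] at this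
    omega
  have hPc' : P c' = Q c' := hrB c' (le_antisymm (hboy.trans_eq (congrArg _ hcc)) hc')
  exact hne (P.injective (hcc.trans hPc'.symm))

theorem StableM.exists_meet [Finite B] {M N : B ≃ G} (hM : StableM rB rG M)
    (hN : StableM rB rG N) :
    ∃ K : B ≃ G, StableM rB rG K ∧ (∀ b, K b = M b ∨ K b = N b) ∧
      ∀ b, rB b (K b) ≤ rB b (M b) ∧ rB b (K b) ≤ rB b (N b) := by
  classical
  have : Finite G := Finite.of_equiv B M
  let f : B → G := fun b => if rB b (M b) ≤ rB b (N b) then M b else N b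
  have hf : ∀ b, f b = M b ∨ f b = N b := fun b => by unfold f; split_ifs <;> simp
  have hle : ∀ b, rB b (f b) ≤ rB b (M b) ∧ rB b (f b) ≤ rB b (N b) := fun b => by
    unfold f; split_ifs <;> omega
  have hinj : f.Injective := by
    intro c c' hcc
    rcases hf c with hc | hc <;> rcases hf c' with hc' | hc' <;> rw [hc, hc'] at hcc
    · exact M.injective hcc
    · exact hM.eq_of_apply_eq hrB hrG hN hcc (hc ▸ (hle c).2) (hc' ▸ (hle c').1)
    · exact hN.eq_of_apply_eq hrB hrG hM hcc (hc ▸ (hle c).1) (hc' ▸ (hle c').2)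
    · exact N.injective hcc
  have hbij : f.Bijective := by
    have := Finite.injective_iff_bijective.1 (hinj.comp M.symm.injective)
    simpa [Function.comp_assoc] using this.comp M.bijective
  let K := Equiv.ofBijective f hbij
  refine ⟨K, ?_, hf, hle⟩
  rintro b g ⟨hb, hg⟩
  have hKg : f (K.symm g) = g := K.apply_symm_apply g
  rcases hf (K.symm g) with h | h
  · rw [← (M.symm_apply_eq).2 (h.symm.trans hKg).symm] at hg
    exact hM b g ⟨hb.trans_le (hle b).1, hg⟩
  · rw [← (N.symm_apply_eq).2 (h.symm.trans hKg).symm] at hg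
    exact hN b g ⟨hb.trans_le (hle b).2, hg⟩

theorem StableM.exists_join [Finite B] {M N : B ≃ G} (hM : StableM rB rG M)
    (hN : StableM rB rG N) :
    ∃ Q : B ≃ G, StableM rB rG Q ∧ (∀ g, Q.symm g = M.symm g ∨ Q.symm g = N.symm g) ∧
      ∀ b, rB b (M b) ≤ rB b (Q b) ∧ rB b (N b) ≤ rB b (Q b) := by
  have : Finite G := Finite.of_equiv B M
  obtain ⟨K, hK, hKcase, hKle⟩ := hM.symm.exists_meet hrG hrB hN.symm
  refine ⟨K.symm, hK.of_symm, by simpa using hKcase, fun b => ⟨?_, ?_⟩⟩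
  · simpa using hM.symm.rank_symm_le_of_rank_le hrG (fun g => (hKle g).1) b
  · simpa using hN.symm.rank_symm_le_of_rank_le hrG (fun g => (hKle g).2) b

end Lattice

section Exposed

variable (hrB : ∀ b, Function.Injective (rB b)) (hrG : ∀ g, Function.Injective (rG g))
variable {M R : B ≃ G} {ρ : Rotation B G}
include hrB hrG

theorem Exposed.apply_bs_sub_one (he : Exposed rB rG M ρ) (hR : StableM rB rG R)
    (hle : ∀ b, rB b (M b) ≤ rB b (R b)) {j : ZMod ρ.r} (hj : R (ρ.bs j) = ρ.gs j) :
    R (ρ.bs (j - 1)) = ρ.gs (j - 1) := by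
  set c := ρ.bs (j - 1)
  have hgirls := hR.rank_symm_le_of_rank_le hrB hle
  have hMc : M c = ρ.gs (j - 1) := he.1 _
  by_contra hne
  have hlt : rB c (M c) < rB c (R c) := lt_of_le_of_ne (hle c) ((hrB c).ne (hMc ▸ Ne.symm hne))
  have hexp3 := he.2.2 (j - 1) (R c)
  have hexp2 := he.2.1 (j - 1)
  rw [sub_add_cancel] at hexp3
  rw [sub_add_cancel, he.symm_apply_gs] at hexp2
  -- `R c` can lie neither strictly between `g_{j-1}` and `g_j` (minimality of `g_j`) nor
  -- beyond `g_j` (then `(c, g_j)` blocks `R`).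
  rcases lt_trichotomy (rB c (R c)) (rB c (ρ.gs j)) with h | h | h
  · refine hexp3 h (lt_of_le_of_ne ?_ ((hrG _).ne fun h' => ?_))
    · simpa using hgirls (R c)
    · exact hlt.ne (congrArg _ (M.symm_apply_eq.1 h'.symm).symm)
  · have : c = ρ.bs j := R.injective ((hrB c h).trans hj.symm)
    exact ρ.add_one_ne (j - 1) (by simpa using ρ.inj_bs this.symm)
  · have hRj : R.symm (ρ.gs j) = ρ.bs j := by rw [← hj, Equiv.symm_apply_apply]
    exact hR c (ρ.gs j) ⟨h, hRj ▸ hexp2⟩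

theorem Exposed.of_rank_le (he : Exposed rB rG M ρ) (hR : StableM rB rG R)
    (hle : ∀ b, rB b (M b) ≤ rB b (R b)) {i : ZMod ρ.r} (hi : R (ρ.bs i) = ρ.gs i) :
    Exposed rB rG R ρ := by
  have hRρ : ∀ k : ℕ, R (ρ.bs (i - k)) = ρ.gs (i - k) := by
    intro k
    induction k with
    | zero => simpa using hi
    | succ k ih =>
      simpa [sub_add_eq_sub_sub] using he.apply_bs_sub_one hrB hrG hR hle ih
  have hRbs : ∀ j, R (ρ.bs j) = ρ.gs j := fun j => by
    obtain ⟨k, hk⟩ := ρ.exists_add_natCast_eq j i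
    simpa [← hk] using hRρ k
  have hsymm : ∀ j, R.symm (ρ.gs j) = M.symm (ρ.gs j) := fun j => by
    rw [he.symm_apply_gs, Equiv.symm_apply_eq, hRbs]
  refine ⟨hRbs, fun j => hsymm (j + 1) ▸ he.2.1 j, fun j g hg hgR => he.2.2 j g hg ?_⟩
  exact hgR.trans_le (hR.rank_symm_le_of_rank_le hrB hle g)

end Exposed

section Common

variable {N : B ≃ G} {ρ σ : Rotation B G}

theorem Exposed.gs_add_one_eq (hrB : ∀ b, Function.Injective (rB b))
    (hρ : Exposed rB rG N ρ) (hσ : Exposed rB rG N σ) {i : ZMod ρ.r} {j : ZMod σ.r}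
    (hb : ρ.bs i = σ.bs j) : ρ.gs (i + 1) = σ.gs (j + 1) := by
  have hρ2 := hρ.2.1 i
  have hσ2 := hσ.2.1 j
  rw [hb] at hρ2
  rcases lt_trichotomy (rB (σ.bs j) (ρ.gs (i + 1))) (rB (σ.bs j) (σ.gs (j + 1))) with h | h | h
  · exact absurd hρ2 (hσ.2.2 j _ h)
  · exact hrB _ h
  · rw [← hb] at h hσ2
    exact absurd hσ2 (hρ.2.2 i _ h)

theorem Exposed.bs_add_eq (hrB : ∀ b, Function.Injective (rB b))
    (hρ : Exposed rB rG N ρ) (hσ : Exposed rB rG N σ) {i : ZMod ρ.r} {j : ZMod σ.r}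
    (hb : ρ.bs i = σ.bs j) (k : ℕ) :
    ρ.bs (i + k) = σ.bs (j + k) ∧ ρ.gs (i + k) = σ.gs (j + k) := by
  suffices hbs : ρ.bs (i + k) = σ.bs (j + k) by
    exact ⟨hbs, by rw [← hρ.1, ← hσ.1, hbs]⟩
  induction k with
  | zero => simpa using hb
  | succ k ih =>
    rw [Nat.cast_succ, Nat.cast_succ, ← add_assoc, ← add_assoc, ← hρ.symm_apply_gs,
      ← hσ.symm_apply_gs, hρ.gs_add_one_eq hrB hσ ih]

theorem rotPairs_subset_of_forall_add {i : ZMod ρ.r} {j : ZMod σ.r}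
    (h : ∀ k : ℕ, ρ.bs (i + k) = σ.bs (j + k) ∧ ρ.gs (i + k) = σ.gs (j + k)) :
    rotPairs ρ ⊆ rotPairs σ := by
  rintro _ ⟨m, rfl⟩
  obtain ⟨k, rfl⟩ := ρ.exists_add_natCast_eq i m
  exact ⟨j + k, by rw [(h k).1, (h k).2]⟩

theorem rotPairs_eq_of_forall_add {i : ZMod ρ.r} {j : ZMod σ.r}
    (h : ∀ k : ℕ, ρ.bs (i + k) = σ.bs (j + k) ∧ ρ.gs (i + k) = σ.gs (j + k)) :
    rotPairs ρ = rotPairs σ :=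
  (rotPairs_subset_of_forall_add h).antisymm
    (rotPairs_subset_of_forall_add fun k => ⟨(h k).1.symm, (h k).2.symm⟩)

end Common

theorem IsRotation.dual (hrB : ∀ b, Function.Injective (rB b)) {ρ : Rotation B G}
    (h : IsRotation rB rG ρ) : IsRotation rG rB ρ.dual := by
  obtain ⟨M, hM, he⟩ := h
  obtain ⟨N, hN⟩ := he.exists_eliminates
  exact ⟨N.symm, (hN.stableM hM).symm, hN.exposed_dual hrB hM⟩

section Uniqueness

variable [Finite B]
variable (hrB : ∀ b, Function.Injective (rB b)) (hrG : ∀ g, Function.Injective (rG g))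
variable {ρ₁ ρ₂ : Rotation B G} {b : B} {g : G}
include hrB hrG

theorem IsRotation.exists_forall_add_eq_of_movesFrom (h₁ : IsRotation rB rG ρ₁)
    (h₂ : IsRotation rB rG ρ₂) (m₁ : MovesFrom ρ₁ b g) (m₂ : MovesFrom ρ₂ b g) :
    ∃ (i : ZMod ρ₁.r) (j : ZMod ρ₂.r), ∀ k : ℕ,
      ρ₁.bs (i + k) = ρ₂.bs (j + k) ∧ ρ₁.gs (i + k) = ρ₂.gs (j + k) := by
  obtain ⟨M₁, hM₁, he₁⟩ := h₁
  obtain ⟨M₂, hM₂, he₂⟩ := h₂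
  obtain ⟨i, rfl, rfl⟩ := m₁
  obtain ⟨j, hb, hg⟩ := m₂
  obtain ⟨Q, hQ, hQsymm, hQle⟩ := hM₁.exists_join hrB hrG hM₂
  have hQb : Q.symm (ρ₁.gs i) = ρ₁.bs i := by
    rcases hQsymm (ρ₁.gs i) with h | h
    · rw [h, he₁.symm_apply_gs]
    · rw [h, ← hg, he₂.symm_apply_gs, hb]
  have hQ₁ : Exposed rB rG Q ρ₁ :=
    he₁.of_rank_le hrB hrG hQ (fun b => (hQle b).1) (Q.symm_apply_eq.1 hQb).symm
  have hQ₂ : Exposed rB rG Q ρ₂ :=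
    he₂.of_rank_le hrB hrG hQ (fun b => (hQle b).2) (i := j)
      (by rw [hb, hg, ← hQb, Q.apply_symm_apply])
  exact ⟨i, j, hQ₁.bs_add_eq hrB hQ₂ hb.symm⟩

theorem IsRotation.rotPairs_eq_of_movesFrom (h₁ : IsRotation rB rG ρ₁)
    (h₂ : IsRotation rB rG ρ₂) (m₁ : MovesFrom ρ₁ b g) (m₂ : MovesFrom ρ₂ b g) :
    rotPairs ρ₁ = rotPairs ρ₂ := by
  obtain ⟨i, j, h⟩ := h₁.exists_forall_add_eq_of_movesFrom hrB hrG h₂ m₁ m₂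
  exact rotPairs_eq_of_forall_add h

theorem IsRotation.rotPairs_eq_of_movesTo (h₁ : IsRotation rB rG ρ₁)
    (h₂ : IsRotation rB rG ρ₂) (m₁ : MovesTo ρ₁ b g) (m₂ : MovesTo ρ₂ b g) :
    rotPairs ρ₁ = rotPairs ρ₂ := by
  have : Finite G := by
    obtain ⟨M, -⟩ := h₁
    exact Finite.of_equiv B M
  obtain ⟨(i : ZMod ρ₁.r), (j : ZMod ρ₂.r), h⟩ :=
    (h₁.dual hrB).exists_forall_add_eq_of_movesFrom hrG hrB (h₂.dual hrB)
      (ρ₁.movesFrom_dual_iff.2 m₁) (ρ₂.movesFrom_dual_iff.2 m₂)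
  refine rotPairs_eq_of_forall_add (i := i + 1) (j := j + 1) fun k => ⟨?_, ?_⟩
  · rw [add_assoc, add_comm 1, ← Nat.cast_succ, add_assoc, add_comm 1, ← Nat.cast_succ]
    exact (h (k + 1)).2
  · rw [add_right_comm i, add_right_comm j]
    exact (h k).1

end Uniqueness

theorem ElimChain.exists_movesTo {N M : B ≃ G} {L : List (Rotation B G)} {b : B} {g : G}
    (hN : StableM rB rG N) (hc : ElimChain rB rG N L M) (hNb : N b ≠ g) (hMb : M b = g) :
    ∃ ρ ∈ L, MovesTo ρ b g ∧ IsRotation rB rG ρ := by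
  induction L generalizing N with
  | nil => exact absurd (hc ▸ hMb) hNb
  | cons τ L ih =>
    obtain ⟨N', hτ, hc'⟩ := hc
    by_cases hN'b : N' b = g
    · by_cases hbτ : ∃ i, b = τ.bs i
      · obtain ⟨i, rfl⟩ := hbτ
        exact ⟨τ, List.mem_cons_self, ⟨i, rfl, (hτ.2.1 i).symm.trans hN'b⟩, N, hN, hτ.1⟩
      · push Not at hbτ
        exact absurd ((hτ.2.2 b hbτ).symm.trans hN'b) hNb
    · obtain ⟨ρ, hρ, hmv⟩ := ih (hτ.stableM hN) hc' hN'b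
      exact ⟨ρ, List.mem_cons_of_mem _ hρ, hmv⟩

theorem IsRotation.precedes_of_movesTo_of_movesFrom [Finite B]
    (hrB : ∀ b, Function.Injective (rB b)) (hrG : ∀ g, Function.Injective (rG g))
    {ρ₁ ρ₂ : Rotation B G} {b : B} {g : G} (h₁ : IsRotation rB rG ρ₁)
    (m₁ : MovesTo ρ₁ b g) (m₂ : MovesFrom ρ₂ b g) : Precedes rB rG ρ₁ ρ₂ := by
  intro M₀ L M hM₀ hc he₂
  obtain ⟨M₁, hM₁, he₁⟩ := id h₁
  obtain ⟨i, rfl, rfl⟩ := id m₁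
  obtain ⟨j, hb, hg⟩ := m₂
  have hM₀b : M₀ (ρ₁.bs i) ≠ ρ₁.gs (i + 1) := by
    intro h
    have hopt := hM₀.2 M₁ hM₁ (ρ₁.bs i)
    rw [h, he₁.1 i] at hopt
    exact (he₁.rank_lt_succ hrB hM₁ i).not_ge hopt
  have hMb : M (ρ₁.bs i) = ρ₁.gs (i + 1) := by rw [← hb, he₂.1, hg]
  obtain ⟨ρ, hρ, hmv, hrot⟩ := ElimChain.exists_movesTo hM₀.1 hc hM₀b hMb
  exact ⟨ρ, hρ, hrot.rotPairs_eq_of_movesTo hrB hrG h₁ hmv m₁⟩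

end

theorem rotation_uniqueness_and_precedence_general {B G : Type*} [Fintype B]
    (rB : B → G → ℕ) (rG : G → B → ℕ)
    (hrB : ∀ b, Function.Injective (rB b)) (hrG : ∀ g, Function.Injective (rG g))
    (b : B) (g : G)
    (ρ₁ ρ₂ : Rotation B G)
    (h₁ : IsRotation rB rG ρ₁) (h₂ : IsRotation rB rG ρ₂) :
    (MovesTo ρ₁ b g → MovesTo ρ₂ b g → rotPairs ρ₁ = rotPairs ρ₂) ∧
      (MovesFrom ρ₁ b g → MovesFrom ρ₂ b g → rotPairs ρ₁ = rotPairs ρ₂) ∧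
      (MovesTo ρ₁ b g → MovesFrom ρ₂ b g → Precedes rB rG ρ₁ ρ₂) :=
  ⟨h₁.rotPairs_eq_of_movesTo hrB hrG h₂, h₁.rotPairs_eq_of_movesFrom hrB hrG h₂,
    h₁.precedes_of_movesTo_of_movesFrom hrB hrG⟩

/-- For any boy `b` and girl `g`: at most one rotation (up to cyclic shift, i.e. up to
equality of pair sets) moves `b` to `g`, at most one moves `b` from `g`; and if `ρ₁`
moves `b` to `g` and `ρ₂` moves `b` from `g`, then `ρ₁` precedes `ρ₂` in the rotation
poset. -/
theorem rotation_uniqueness_and_precedence {B G : Type*} [Fintype B] [Fintype G]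
    [DecidableEq B] [DecidableEq G]
    (rB : B → G → ℕ) (rG : G → B → ℕ)
    (hrB : ∀ b, Function.Injective (rB b)) (hrG : ∀ g, Function.Injective (rG g))
    (b : B) (g : G)
    (ρ₁ ρ₂ : Rotation B G)
    (h₁ : IsRotation rB rG ρ₁) (h₂ : IsRotation rB rG ρ₂) :
    (MovesTo ρ₁ b g → MovesTo ρ₂ b g → rotPairs ρ₁ = rotPairs ρ₂) ∧
      (MovesFrom ρ₁ b g → MovesFrom ρ₂ b g → rotPairs ρ₁ = rotPairs ρ₂) ∧
      (MovesTo ρ₁ b g → MovesFrom ρ₂ b g → Precedes rB rG ρ₁ ρ₂) :=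
  rotation_uniqueness_and_precedence_general rB rG hrB hrG b g ρ₁ ρ₂ h₁ h₂
end
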